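/- Let A be a Lie-Rinehart algebra over R and ∇ : L × A → A a connection on A. Regard the basic curvature R^bas_∇ as an element of Ω²(A; Hom_R(L,A)), where Hom_R(L,A) carries the A-connection (∇^bas_α T)(X) := ∇^bas_α(T(X)) − T(∇^bas_α X). Then R^bas_∇ is closed with respect to this connection: d_{∇^bas}(R^bas_∇) = 0 in Ω³(A; Hom_R(L,A)). -/

import Mathlib

/-! Basic algebraic model: Lie-Rinehart algebras over a commutative `ℝ`-algebra `R`,
`A`-connections, and raw Koszul/wedge operations on forms. -/

section LieRinehartBasics

variable (R : Type) [CommRing R] [Algebra ℝ R]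
variable (A : Type) [AddCommGroup A] [Module R A]

/-- A Lie-Rinehart algebra over the commutative `ℝ`-algebra `R`: an `R`-module `A` with an
`ℝ`-bilinear Lie bracket and an `R`-linear anchor `ρ : A → Der_ℝ(R)` preserving brackets
and satisfying the Leibniz rule. -/
structure LieRinehart where
  bracket : A → A → A
  anchor : A →ₗ[R] Derivation ℝ R R
  bracket_add_left : ∀ x y z : A, bracket (x + y) z = bracket x z + bracket y z
  bracket_add_right : ∀ x y z : A, bracket x (y + z) = bracket x y + bracket x z
  bracket_skew : ∀ x y : A, bracket x y = - bracket y x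
  bracket_jacobi : ∀ x y z : A,
    bracket x (bracket y z) = bracket (bracket x y) z + bracket y (bracket x z)
  bracket_leibniz : ∀ (f : R) (x y : A),
    bracket x (f • y) = f • bracket x y + (anchor x f) • y
  anchor_bracket : ∀ (x y : A) (f : R),
    anchor (bracket x y) f = anchor x (anchor y f) - anchor y (anchor x f)

variable {R A}

/-- An `A`-connection on the `R`-module `E`. -/
structure AConn (LR : LieRinehart R A) (E : Type) [AddCommGroup E] [Module R E] where
  conn : A → E → E
  conn_add_left : ∀ x y s, conn (x + y) s = conn x s + conn y s
  conn_smul_left : ∀ (f : R) x s, conn (f • x) s = f • conn x s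
  conn_add_right : ∀ x s t, conn x (s + t) = conn x s + conn x t
  conn_leibniz : ∀ x (f : R) s, conn x (f • s) = f • conn x s + (LR.anchor x f) • s

/-- The curvature of an `A`-connection. -/
def AConn.curv {LR : LieRinehart R A} {E : Type} [AddCommGroup E] [Module R E]
    (C : AConn LR E) (x y : A) (s : E) : E :=
  C.conn x (C.conn y s) - C.conn y (C.conn x s) - C.conn (LR.bracket x y) s

/-- The raw Koszul operator sending a `p`-form (an arbitrary function on `p`-tuples)
to a `(p+1)`-form, for an operation `nab` ("connection") and a bracket `br`:
`(dω)(α₀,…,α_p) = Σᵢ (-1)ⁱ nab_{αᵢ}(ω(…,α̂ᵢ,…)) + Σ_{i<j} (-1)^{i+j} ω(br(αᵢ,αⱼ),…,α̂ᵢ,…,α̂ⱼ,…)`. -/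
def koszulRaw {E : Type} [AddCommGroup E] (nab : A → E → E) (br : A → A → A)
    (p : ℕ) (ω : (Fin p → A) → E) : (Fin (p + 1) → A) → E := fun α =>
  (∑ i : Fin (p + 1), (-1 : ℤ) ^ (i : ℕ) • nab (α i) (ω (fun k => α (i.succAbove k))))
  + ∑ i : Fin (p + 1), ∑ j : Fin (p + 1),
      if (i : ℕ) < (j : ℕ) then
        (-1 : ℤ) ^ ((i : ℕ) + (j : ℕ)) • ω (fun k : Fin p =>
          if (k : ℕ) = 0 then br (α i) (α j)
          else α ⟨if (k : ℕ) - 1 < (i : ℕ) then (k : ℕ) - 1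
                  else if (k : ℕ) < (j : ℕ) then (k : ℕ) else (k : ℕ) + 1,
                by have hk := k.isLt; split_ifs <;> omega⟩)
      else 0

/-- `(p,q)`-shuffles: permutations of `Fin (p+q)` which are strictly increasing on the
first `p` and on the last `q` positions. -/
def IsShuffle (p q : ℕ) (σ : Equiv.Perm (Fin (p + q))) : Prop :=
  (∀ i j : Fin (p + q), i < j → (j : ℕ) < p → σ i < σ j) ∧
  (∀ i j : Fin (p + q), i < j → p ≤ (i : ℕ) → σ i < σ j)

open scoped Classical in
/-- The raw shuffle wedge product of a scalar `p`-form with an `E`-valued `q`-form. -/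
noncomputable def wedgeRaw {E : Type} [AddCommGroup E] [Module R E]
    (p q : ℕ) (ω : (Fin p → A) → R) (η : (Fin q → A) → E) : (Fin (p + q) → A) → E :=
  fun α => ∑ σ : Equiv.Perm (Fin (p + q)),
    if IsShuffle p q σ then
      (Equiv.Perm.sign σ : ℤ) •
        (ω (fun i => α (σ (Fin.castAdd q i))) • η (fun j => α (σ (Fin.natAdd p j))))
    else 0

end LieRinehartBasics

section BasicConnections

variable {R : Type} [CommRing R] [Algebra ℝ R]
variable {A : Type} [AddCommGroup A] [Module R A]

variable (R A) in
/-- A connection `∇ : L × A → A` on `A`, where `L = Der_ℝ(R)` plays the role of vector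
fields. -/
structure LConn where
  conn : Derivation ℝ R R → A → A
  conn_add_left : ∀ X Y a, conn (X + Y) a = conn X a + conn Y a
  conn_smul_left : ∀ (f : R) X a, conn (f • X) a = f • conn X a
  conn_add_right : ∀ X a b, conn X (a + b) = conn X a + conn X b
  conn_leibniz : ∀ X (f : R) a, conn X (f • a) = f • conn X a + (X f) • a

/-- The basic `A`-connection on `A` induced by `∇`: `∇ᵇᵃˢ_a b = ∇_{ρ(b)} a + [a, b]`. -/
def basA (LR : LieRinehart R A) (N : LConn R A) (a b : A) : A :=
  N.conn (LR.anchor b) a + LR.bracket a b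

/-- The basic `A`-connection on `L = Der_ℝ(R)` induced by `∇`:
`∇ᵇᵃˢ_a X = ρ(∇_X a) + [ρ(a), X]`. -/
def basL (LR : LieRinehart R A) (N : LConn R A) (a : A) (X : Derivation ℝ R R) :
    Derivation ℝ R R :=
  LR.anchor (N.conn X a) + ⁅LR.anchor a, X⁆

/-- The basic curvature of `∇`:
`Rᵇᵃˢ(a,b)(X) = ∇_X [a,b] - [∇_X a, b] - [a, ∇_X b] - ∇_{∇ᵇᵃˢ_b X} a + ∇_{∇ᵇᵃˢ_a X} b`. -/
def basCurv (LR : LieRinehart R A) (N : LConn R A) (a b : A) (X : Derivation ℝ R R) : A :=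
  N.conn X (LR.bracket a b) - LR.bracket (N.conn X a) b - LR.bracket a (N.conn X b)
    - N.conn (basL LR N b X) a + N.conn (basL LR N a X) b

end BasicConnections

/-- The `A`-connection induced by the basic connections on `Hom_R(L, A)`
(realized on plain functions `L → A`): `(∇ᵇᵃˢ_a T)(X) = ∇ᵇᵃˢ_a (T X) - T (∇ᵇᵃˢ_a X)`. -/
def homBasConn {R : Type} [CommRing R] [Algebra ℝ R]
    {A : Type} [AddCommGroup A] [Module R A]
    (LR : LieRinehart R A) (N : LConn R A) (a : A)
    (T : Derivation ℝ R R → A) : Derivation ℝ R R → A :=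
  fun X => basA LR N a (T X) - T (basL LR N a X)

/-! The closedness of the basic curvature is a formal identity. Expanding
`d_{∇ᵇᵃˢ} Rᵇᵃˢ (a, b, c) (X)` through the definitions of `∇ᵇᵃˢ` and `Rᵇᵃˢ` gives a sum of terms
built from `∇`, the brackets of `A` and of `Der_ℝ(R)`, and the anchor `ρ`; these cancel using only
additivity in every slot, skew-symmetry, the Jacobi identities in `A` and in `Der_ℝ(R)`, and
`ρ [a, b] = [ρ a, ρ b]`. -/

namespace LieRinehart

variable {R : Type} [CommRing R] [Algebra ℝ R] {A : Type} [AddCommGroup A] [Module R A]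
  (LR : LieRinehart R A)

lemma bracket_sub_left (x y z : A) : LR.bracket (x - y) z = LR.bracket x z - LR.bracket y z :=
  (AddMonoidHom.mk' (LR.bracket · z) fun x x' => LR.bracket_add_left x x' z).map_sub x y

lemma bracket_neg_right (x y : A) : LR.bracket x (-y) = -LR.bracket x y :=
  (AddMonoidHom.mk' (LR.bracket x) (LR.bracket_add_right x)).map_neg y

lemma bracket_sub_right (x y z : A) : LR.bracket x (y - z) = LR.bracket x y - LR.bracket x z :=
  (AddMonoidHom.mk' (LR.bracket x) (LR.bracket_add_right x)).map_sub y z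

lemma bracket_bracket_left (x y z : A) :
    LR.bracket (LR.bracket x y) z =
      LR.bracket (LR.bracket x z) y - LR.bracket (LR.bracket y z) x := by
  rw [LR.bracket_skew (LR.bracket x z) y, LR.bracket_skew (LR.bracket y z) x,
    LR.bracket_jacobi x y z]
  abel

lemma anchor_bracket_eq_lie (x y : A) :
    LR.anchor (LR.bracket x y) = ⁅LR.anchor x, LR.anchor y⁆ := by
  ext f
  rw [Derivation.commutator_apply, LR.anchor_bracket]

end LieRinehart

namespace LConn

variable {R : Type} [CommRing R] [Algebra ℝ R] {A : Type} [AddCommGroup A] [Module R A]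
  (N : LConn R A)

lemma conn_neg_left (X : Derivation ℝ R R) (a : A) : N.conn (-X) a = -N.conn X a :=
  (AddMonoidHom.mk' (N.conn · a) fun X Y => N.conn_add_left X Y a).map_neg X

lemma conn_sub_left (X Y : Derivation ℝ R R) (a : A) :
    N.conn (X - Y) a = N.conn X a - N.conn Y a :=
  (AddMonoidHom.mk' (N.conn · a) fun X Y => N.conn_add_left X Y a).map_sub X Y

lemma conn_neg_right (X : Derivation ℝ R R) (a : A) : N.conn X (-a) = -N.conn X a :=
  (AddMonoidHom.mk' (N.conn X) (N.conn_add_right X)).map_neg a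

lemma conn_sub_right (X : Derivation ℝ R R) (a b : A) :
    N.conn X (a - b) = N.conn X a - N.conn X b :=
  (AddMonoidHom.mk' (N.conn X) (N.conn_add_right X)).map_sub a b

end LConn

lemma koszulRaw_two {A E : Type} [AddCommGroup E] (nab : A → E → E) (br : A → A → A)
    (ω : (Fin 2 → A) → E) (α : Fin 3 → A) :
    koszulRaw nab br 2 ω α =
      nab (α 0) (ω ![α 1, α 2]) - nab (α 1) (ω ![α 0, α 2]) + nab (α 2) (ω ![α 0, α 1])
        - ω ![br (α 0) (α 1), α 2] + ω ![br (α 0) (α 2), α 1] - ω ![br (α 1) (α 2), α 0] := by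
  simp only [koszulRaw, Fin.sum_univ_succ, Fin.sum_univ_zero]
  norm_num [Fin.succAbove, Fin.lt_def]
  simp only [sub_eq_add_neg, add_assoc]
  congr! with k k k k k k <;> fin_cases k <;> rfl

theorem basCurv_cocycle {R : Type} [CommRing R] [Algebra ℝ R]
    {A : Type} [AddCommGroup A] [Module R A] (LR : LieRinehart R A) (N : LConn R A)
    (a b c : A) (X : Derivation ℝ R R) :
    homBasConn LR N a (basCurv LR N b c) X - homBasConn LR N b (basCurv LR N a c) X
      + homBasConn LR N c (basCurv LR N a b) X - basCurv LR N (LR.bracket a b) c X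
      + basCurv LR N (LR.bracket a c) b X - basCurv LR N (LR.bracket b c) a X = 0 := by
  simp only [homBasConn, basCurv, basA, basL, LR.bracket_add_left, LR.bracket_add_right,
    LR.bracket_sub_right, N.conn_add_left, N.conn_sub_left, map_add, map_sub, lie_add,
    LR.anchor_bracket_eq_lie, lie_lie]
  -- `abel` treats `[x, y]` and `[y, x]` as unrelated atoms: each bracket that occurs in both
  -- orders is put in one order.
  rw [LR.bracket_skew (N.conn ⁅LR.anchor a, X⁆ b) c,
      LR.bracket_skew (N.conn ⁅LR.anchor b, X⁆ a) c,
      LR.bracket_skew (N.conn ⁅LR.anchor c, X⁆ a) b,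
      LR.bracket_skew (N.conn (LR.anchor (N.conn X a)) b) c,
      LR.bracket_skew (N.conn (LR.anchor (N.conn X b)) a) c,
      LR.bracket_skew (N.conn (LR.anchor (N.conn X c)) a) b,
      LR.bracket_skew (N.conn X (LR.bracket a b)) c,
      LR.bracket_skew (N.conn X (LR.bracket a c)) b,
      LR.bracket_skew (N.conn X (LR.bracket b c)) a,
      LR.bracket_skew (N.conn X a) b,
      LR.bracket_skew (N.conn X a) c,
      LR.bracket_skew (N.conn X b) c,
      ← lie_skew (LR.anchor (N.conn X a)) (LR.anchor b),
      ← lie_skew (LR.anchor (N.conn X a)) (LR.anchor c),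
      ← lie_skew (LR.anchor (N.conn X b)) (LR.anchor c),
      LR.bracket_bracket_left a b c]
  simp only [LR.bracket_neg_right, N.conn_neg_left, N.conn_sub_right]
  rw [LR.bracket_jacobi a b (N.conn X c), LR.bracket_jacobi a c (N.conn X b),
    LR.bracket_jacobi b c (N.conn X a)]
  abel

/-- The basic curvature `Rᵇᵃˢ_∇ ∈ Ω²(A; Hom_R(L,A))` is closed with
respect to the connection induced by the basic connections:
`d_{∇ᵇᵃˢ}(Rᵇᵃˢ_∇) = 0` in `Ω³(A; Hom_R(L,A))` (stated by evaluating the `Hom`-valued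
`3`-form on any triple of elements of `A` and any derivation `X`). -/
theorem statement2
    {R : Type} [CommRing R] [Algebra ℝ R]
    {A : Type} [AddCommGroup A] [Module R A]
    (LR : LieRinehart R A) (N : LConn R A) :
    ∀ (α : Fin 3 → A) (X : Derivation ℝ R R),
      koszulRaw (homBasConn LR N) LR.bracket 2
        (fun v : Fin 2 → A => fun Y => basCurv LR N (v 0) (v 1) Y) α X = 0 := by
  intro α X
  rw [koszulRaw_two]
  simpa only [Pi.add_apply, Pi.sub_apply, Matrix.cons_val_zero, Matrix.cons_val_one,
    Matrix.cons_val_fin_one] using basCurv_cocycle LR N (α 0) (α 1) (α 2) X
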